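/- arXiv:1409.1160 — 8 statements merged into one kernel-verified Lean document; each statement's English description precedes it below -/
import Mathlib

section
/- Let n, h, k be integers with 0 ≤ k ≤ h < n. Then ∑_{j=k}^{h} (-1)^{j-k} (n choose j) (j choose k) = (-1)^{h-k} (n choose k) (n-k-1 choose h-k), as an identity of integers. -/
open Finset

/- Since `(n choose j) (j choose k) = (n choose k) (n - k choose j - k)`, the sum is `(n choose k)`
times a partial alternating sum of the row `n - k` of Pascal's triangle, and by Pascal's rule
`∑_{i ≤ m} (-1)^i (N + 1 choose i)` telescopes to `(-1)^m (N choose m)`. -/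

theorem Nat.cast_choose_mul {n j k : ℕ} (hkj : k ≤ j) :
    (n.choose j * j.choose k : ℤ) = n.choose k * (n - k).choose (j - k) := by
  exact_mod_cast Nat.choose_mul hkj

theorem stmt_1 (n h k : ℕ) (hkh : k ≤ h) (hhn : h < n) :
    ∑ j ∈ Finset.Icc k h, (-1 : ℤ) ^ (j - k) * (n.choose j) * (j.choose k) =
      (-1 : ℤ) ^ (h - k) * (n.choose k) * ((n - k - 1).choose (h - k)) := by
  obtain ⟨m, rfl⟩ : ∃ m, h = k + m := ⟨h - k, by omega⟩
  obtain ⟨N, rfl⟩ : ∃ N, n = k + N + 1 := ⟨n - k - 1, by omega⟩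
  calc ∑ j ∈ Icc k (k + m), (-1 : ℤ) ^ (j - k) * ((k + N + 1).choose j) * (j.choose k)
      = ∑ i ∈ range (m + 1), (-1 : ℤ) ^ i * ((k + N + 1).choose (k + i)) * ((k + i).choose k) := by
        rw [← Ico_add_one_right_eq_Icc, sum_Ico_eq_sum_range, show k + m + 1 - k = m + 1 by omega]
        simp only [Nat.add_sub_cancel_left]
    _ = ((k + N + 1).choose k : ℤ) * ∑ i ∈ range (m + 1), (-1 : ℤ) ^ i * (N + 1).choose i := by
        rw [mul_sum]
        refine sum_congr rfl fun i _ ↦ ?_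
        rw [mul_assoc, Nat.cast_choose_mul (Nat.le_add_right k i)]
        simp only [Nat.add_sub_cancel_left, add_assoc]
        ring
    _ = (-1 : ℤ) ^ (k + m - k) * ((k + N + 1).choose k) * ((k + N + 1 - k - 1).choose (k + m - k)) := by
        rw [Int.alternating_sum_range_choose_eq_choose]
        simp only [Nat.add_sub_cancel_left, add_assoc, Nat.add_sub_cancel]
        ring
end

section
/- Let n, h be integers with 0 ≤ h < n. Then ∑_{k=0}^{h} (-1)^{h-k} (n choose k) (n-k-1 choose h-k) = 1, as an identity of integers. -/
/-!
Induction on `h`. Pascal's rule `C(m, j+1) = C(m+1, j+1) - C(m, j)` applied to the second binomial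
splits the sum for `h + 1` into the sum for `h` and the sum
`∑ₖ (-1)^(h+1-k) C(n,k) C(n-k,h+1-k) = C(n,h+1) ∑ₖ (-1)^(h+1-k) C(h+1,k)`, which vanishes.
-/

open Finset Nat

theorem Int.alternating_sum_range_choose_mul_choose {n m : ℕ} (hm : m ≠ 0) :
    ∑ k ∈ Finset.range (m + 1), (-1 : ℤ) ^ (m - k) * n.choose k * (n - k).choose (m - k) = 0 := by
  have hterm : ∀ k ∈ Finset.range (m + 1),
      (-1 : ℤ) ^ (m - k) * n.choose k * (n - k).choose (m - k) =
        n.choose m * ((-1) ^ (m - k) * m.choose (m - k)) := fun k hk ↦ by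
    rw [choose_symm (by grind), mul_assoc, ← Nat.cast_mul, ← choose_mul (by grind), Nat.cast_mul]
    ring
  have hreflect := sum_range_reflect (fun j ↦ (-1 : ℤ) ^ j * m.choose j) (m + 1)
  rw [Nat.add_sub_cancel] at hreflect
  rw [sum_congr rfl hterm, ← mul_sum, hreflect, Int.alternating_sum_range_choose_of_ne hm, mul_zero]

theorem Int.neg_one_pow_mul_choose_succ_succ (m j : ℕ) :
    (-1 : ℤ) ^ (j + 1) * m.choose (j + 1) =
      (-1) ^ (j + 1) * (m + 1).choose (j + 1) + (-1) ^ j * m.choose j := by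
  rw [choose_succ_succ', pow_succ]
  push_cast
  ring

theorem stmt_2 (n h : ℕ) (hhn : h < n) :
    ∑ k ∈ Finset.range (h + 1), (-1 : ℤ) ^ (h - k) * (n.choose k) * ((n - k - 1).choose (h - k)) = 1 := by
  induction h with
  | zero => simp
  | succ h ih =>
    have hpascal : ∀ k ∈ range (h + 1),
        (-1 : ℤ) ^ (h + 1 - k) * n.choose k * (n - k - 1).choose (h + 1 - k) =
          (-1) ^ (h + 1 - k) * n.choose k * (n - k).choose (h + 1 - k) +
            (-1) ^ (h - k) * n.choose k * (n - k - 1).choose (h - k) := fun k hk ↦ by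
      have hhk : h + 1 - k = h - k + 1 := by grind
      have hnk : n - k = n - k - 1 + 1 := by omega
      generalize n - k - 1 = m at hnk ⊢
      rw [hhk, hnk, mul_right_comm, Int.neg_one_pow_mul_choose_succ_succ]
      ring
    have hvanish := Int.alternating_sum_range_choose_mul_choose (n := n) h.succ_ne_zero
    rw [sum_range_succ] at hvanish ⊢
    rw [sum_congr rfl hpascal, sum_add_distrib, ih (by omega)]
    simp only [Nat.sub_self, choose_zero_right] at hvanish ⊢
    linarith
end

section
/- Let G be an additive commutative group, h ≥ 0 an integer, and a : ℕ → G a sequence. Then a is an arithmetic progression of order h if and only if for every n ≥ 0, a_n = ∑_{k=0}^{h} (n choose k) • (D^k a)_0, where • denotes natural number scalar multiplication in G. -/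
/-- The difference operator on sequences in an additive commutative group. -/
def diffOp {G : Type*} [AddCommGroup G] (a : ℕ → G) : ℕ → G :=
  fun n => a (n + 1) - a n

/-- `a` is an arithmetic progression of order `h`. -/
def IsAPOfOrder {G : Type*} [AddCommGroup G] (a : ℕ → G) (h : ℕ) : Prop :=
  ∀ n : ℕ, ∑ k ∈ Finset.range (h + 2), ((-1 : ℤ) ^ (h + 1 - k) * ((h + 1).choose k)) • a (n + k) = 0

/-!
Writing `Δ` for the difference operator, the defining identity of an arithmetic progression of
order `h` says exactly that `Δ^[h + 1] a = 0` (binomial expansion of `Δ = shift - 1`). Newton's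
forward-difference formula `a n = ∑_{k ≤ n} (n choose k) • (Δ^[k] a) 0` then truncates at `k = h`.
Conversely, `Δ` acts on Newton sums `∑_{k ≤ m} (n choose k) • c k` by shifting the coefficients
and lowering `m`, by Pascal's rule, so `Δ^[h + 1]` kills any Newton sum with `h + 1` terms.
-/

section

open Finset fwdDiff

variable {G : Type*} [AddCommGroup G]

theorem diffOp_eq_fwdDiff : (diffOp : (ℕ → G) → ℕ → G) = Δ_[1] := rfl

theorem iterate_diffOp_eq_sum (a : ℕ → G) (m n : ℕ) :
    diffOp^[m] a n = ∑ k ∈ range (m + 1), ((-1 : ℤ) ^ (m - k) * m.choose k) • a (n + k) := by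
  simp [diffOp_eq_fwdDiff, fwdDiff_iter_eq_sum_shift]

theorem isAPOfOrder_iff_iterate_diffOp_eq_zero (a : ℕ → G) (h : ℕ) :
    IsAPOfOrder a h ↔ ∀ n, diffOp^[h + 1] a n = 0 := by
  simp only [IsAPOfOrder, iterate_diffOp_eq_sum]

theorem eq_sum_choose_nsmul_iterate_diffOp (a : ℕ → G) (n : ℕ) :
    a n = ∑ k ∈ range (n + 1), n.choose k • diffOp^[k] a 0 := by
  simpa [diffOp_eq_fwdDiff] using shift_eq_sum_fwdDiff_iter 1 a n 0

theorem iterate_diffOp_eq_zero_of_le {a : ℕ → G} {m : ℕ} (ha : ∀ n, diffOp^[m] a n = 0)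
    {k : ℕ} (hk : m ≤ k) (n : ℕ) : diffOp^[k] a n = 0 := by
  obtain ⟨j, rfl⟩ := Nat.exists_eq_add_of_le hk
  rw [add_comm, Function.iterate_add_apply, funext ha]
  exact congr_fun (Function.iterate_fixed (fwdDiff_const 1 (0 : G)) j) n

theorem diffOp_sum_choose_nsmul (c : ℕ → G) (m : ℕ) :
    diffOp (fun n => ∑ k ∈ range (m + 1), n.choose k • c k) =
      fun n => ∑ k ∈ range m, n.choose k • c (k + 1) := by
  ext n
  simp only [diffOp, sum_range_succ' _ m, Nat.choose_zero_right, add_sub_add_right_eq_sub,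
    ← sum_sub_distrib, Nat.choose_succ_succ, add_nsmul, add_sub_cancel_right]

theorem iterate_diffOp_sum_choose_nsmul (c : ℕ → G) (m : ℕ) :
    diffOp^[m] (fun n => ∑ k ∈ range m, n.choose k • c k) = 0 := by
  induction m generalizing c with
  | zero => rfl
  | succ m ih => rw [Function.iterate_succ_apply, diffOp_sum_choose_nsmul, ih]

end

theorem stmt_4 {G : Type*} [AddCommGroup G] (a : ℕ → G) (h : ℕ) :
    IsAPOfOrder a h ↔
      ∀ n : ℕ, a n = ∑ k ∈ Finset.range (h + 1), (n.choose k) • (diffOp^[k] a) 0 := by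
  rw [isAPOfOrder_iff_iterate_diffOp_eq_zero]
  constructor
  · intro ha n
    rw [eq_sum_choose_nsmul_iterate_diffOp a n]
    rcases le_total n h with hnh | hhn
    · refine (Finset.eventually_constant_sum (fun k hk => ?_) (by omega)).symm
      rw [Nat.choose_eq_zero_of_lt hk, zero_smul]
    · refine Finset.eventually_constant_sum (fun k hk => ?_) (by omega)
      rw [iterate_diffOp_eq_zero_of_le ha hk, smul_zero]
  · intro ha n
    rw [funext ha]
    exact congr_fun (iterate_diffOp_sum_choose_nsmul _ (h + 1)) n
end

section
/- Let G be an additive commutative group, h ≥ 0 an integer, and a : ℕ → G a sequence. Then a is an arithmetic progression of order h if and only if for every integer n > h, a_n = ∑_{k=0}^{h} (-1)^{h-k} (n choose k) (n-k-1 choose h-k) • a_k, where • denotes integer scalar multiplication in G. -/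
open Finset fwdDiff

theorem sum_choose_mul_neg_one_pow_mul_choose {h k n : ℕ} (hk : k ≤ h) (hkn : k < n) :
    ∑ j ∈ range (h + 1), (n.choose j : ℤ) * ((-1) ^ (j - k) * j.choose k) =
      (-1) ^ (h - k) * n.choose k * (n - k - 1).choose (h - k) := by
  obtain ⟨m, rfl⟩ : ∃ m, h = k + m := ⟨h - k, by omega⟩
  rw [show k + m + 1 = k + (m + 1) by ring, sum_range_add,
    sum_eq_zero fun j hj ↦ by rw [Nat.choose_eq_zero_of_lt (mem_range.1 hj)]; simp, zero_add]
  calc ∑ i ∈ range (m + 1), (n.choose (k + i) : ℤ) * ((-1) ^ (k + i - k) * (k + i).choose k)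
      = n.choose k * ∑ i ∈ range (m + 1), (-1) ^ i * ((n - k - 1 + 1).choose i : ℤ) := by
        rw [mul_sum, show n - k - 1 + 1 = n - k by omega]
        refine sum_congr rfl fun i _ ↦ ?_
        have key : (n.choose (k + i) * (k + i).choose k : ℤ) = n.choose k * (n - k).choose i := by
          simpa using congrArg (Nat.cast (R := ℤ)) (Nat.choose_mul (n := n) (Nat.le_add_right k i))
        rw [Nat.add_sub_cancel_left]
        linear_combination (-1 : ℤ) ^ i * key
    _ = _ := by rw [Int.alternating_sum_range_choose_eq_choose, Nat.add_sub_cancel_left]; ring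

section NewtonPoly

variable {G : Type*} [AddCommGroup G]

theorem isAPOfOrder_iff_fwdDiff_iter_eq_zero (a : ℕ → G) (h : ℕ) :
    IsAPOfOrder a h ↔ Δ_[1] ^[h + 1] a = 0 := by
  simp only [IsAPOfOrder, funext_iff, fwdDiff_iter_eq_sum_shift, smul_eq_mul, mul_one,
    Pi.zero_apply]

theorem apply_eq_sum_fwdDiff_iter (a : ℕ → G) (n : ℕ) :
    a n = ∑ j ∈ range (n + 1), n.choose j • Δ_[1] ^[j] a 0 := by
  simpa using shift_eq_sum_fwdDiff_iter 1 a n 0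

theorem fwdDiff_iter_apply_zero_eq_sum_of_le (a : ℕ → G) {j h : ℕ} (hj : j ≤ h) :
    Δ_[1] ^[j] a 0 = ∑ k ∈ range (h + 1), ((-1 : ℤ) ^ (j - k) * j.choose k) • a k := by
  rw [fwdDiff_iter_eq_sum_shift]
  simp only [zero_add, smul_eq_mul, mul_one]
  refine sum_subset (range_subset_range.2 (by omega)) fun k _ hk ↦ ?_
  rw [Nat.choose_eq_zero_of_lt (by simpa using hk)]
  simp

def newtonPoly (g : ℕ → G) (h n : ℕ) : G :=
  ∑ j ∈ range (h + 1), n.choose j • g j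

theorem fwdDiff_newtonPoly_succ (g : ℕ → G) (h : ℕ) :
    Δ_[1] (newtonPoly g (h + 1)) = newtonPoly (fun j ↦ g (j + 1)) h := by
  ext n
  simp only [fwdDiff, newtonPoly, ← sum_sub_distrib]
  rw [sum_range_succ']
  simp [Nat.choose_succ_succ', add_smul]

theorem fwdDiff_iter_newtonPoly_eq_zero (g : ℕ → G) (h : ℕ) :
    Δ_[1] ^[h + 1] (newtonPoly g h) = 0 := by
  induction h generalizing g with
  | zero => ext n; simp [newtonPoly, fwdDiff]
  | succ h ih => rw [Function.iterate_succ_apply, fwdDiff_newtonPoly_succ, ih]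

theorem newtonPoly_fwdDiff_iter_of_le (a : ℕ → G) {h n : ℕ} (hn : n ≤ h) :
    newtonPoly (fun j ↦ Δ_[1] ^[j] a 0) h n = a n := by
  rw [apply_eq_sum_fwdDiff_iter a n, newtonPoly]
  refine (sum_subset (range_subset_range.2 (by omega)) fun j _ hj ↦ ?_).symm
  rw [Nat.choose_eq_zero_of_lt (by simpa using hj), zero_smul]

theorem eq_newtonPoly_of_fwdDiff_iter_eq_zero {a : ℕ → G} {h : ℕ} (ha : Δ_[1] ^[h + 1] a = 0)
    (n : ℕ) : a n = newtonPoly (fun j ↦ Δ_[1] ^[j] a 0) h n := by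
  rcases le_or_gt n h with hn | hn
  · exact (newtonPoly_fwdDiff_iter_of_le a hn).symm
  rw [apply_eq_sum_fwdDiff_iter a n, newtonPoly]
  refine (sum_subset (range_subset_range.2 (by omega)) fun j _ hj ↦ ?_).symm
  obtain ⟨i, rfl⟩ : ∃ i, j = i + (h + 1) := ⟨j - (h + 1), by simp at hj; omega⟩
  rw [Function.iterate_add_apply, ha, Function.iterate_fixed (by ext; simp [fwdDiff]),
    Pi.zero_apply, smul_zero]

theorem newtonPoly_fwdDiff_iter_eq_sum (a : ℕ → G) {h n : ℕ} (hn : h < n) :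
    newtonPoly (fun j ↦ Δ_[1] ^[j] a 0) h n = ∑ k ∈ range (h + 1),
      ((-1 : ℤ) ^ (h - k) * n.choose k * (n - k - 1).choose (h - k)) • a k := by
  calc newtonPoly (fun j ↦ Δ_[1] ^[j] a 0) h n
      = ∑ j ∈ range (h + 1), ∑ k ∈ range (h + 1),
          ((n.choose j : ℤ) * ((-1) ^ (j - k) * j.choose k)) • a k := by
        refine sum_congr rfl fun j hj ↦ ?_
        dsimp only
        rw [fwdDiff_iter_apply_zero_eq_sum_of_le a (Nat.lt_succ_iff.1 (mem_range.1 hj)), smul_sum]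
        simp only [mul_smul, natCast_zsmul]
    _ = _ := by
        rw [sum_comm]
        refine sum_congr rfl fun k hk ↦ ?_
        have hkh := Nat.lt_succ_iff.1 (mem_range.1 hk)
        rw [← sum_smul, sum_choose_mul_neg_one_pow_mul_choose hkh (by omega)]

end NewtonPoly

theorem stmt_5 {G : Type*} [AddCommGroup G] (a : ℕ → G) (h : ℕ) :
    IsAPOfOrder a h ↔
      ∀ n : ℕ, h < n →
        a n = ∑ k ∈ Finset.range (h + 1),
          ((-1 : ℤ) ^ (h - k) * (n.choose k) * ((n - k - 1).choose (h - k))) • a k := by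
  rw [isAPOfOrder_iff_fwdDiff_iter_eq_zero]
  constructor
  · intro ha n hn
    rw [eq_newtonPoly_of_fwdDiff_iter_eq_zero ha n, newtonPoly_fwdDiff_iter_eq_sum a hn]
  · intro hformula
    have interp : a = newtonPoly (fun j ↦ Δ_[1] ^[j] a 0) h := by
      ext n
      rcases le_or_gt n h with hn | hn
      · exact (newtonPoly_fwdDiff_iter_of_le a hn).symm
      · rw [hformula n hn, newtonPoly_fwdDiff_iter_eq_sum a hn]
    rw [interp]
    exact fwdDiff_iter_newtonPoly_eq_zero _ h
end

section
/- Let (E,d) be a metric space, m ≥ 1 an integer, q > 0 a real number, and T : E → E an (m,q)-isometry. For x, y ∈ E define ρ_T(x,y) = (∑_{k=0}^{m-1} (-1)^{m-1-k} (m-1 choose k) d(T^k x, T^k y)^q)^{1/q}. Then: (i) for all x, y ∈ E the sequence n ↦ d(T^n x, T^n y)^q / n^{m-1} converges and ρ_T(x,y)^q = (m-1)! · lim_{n→∞} d(T^n x, T^n y)^q / n^{m-1}; (ii) ρ_T is a semi-distance on E, i.e. ρ_T(x,y) ≥ 0, ρ_T(x,x) = 0, ρ_T(x,y) = ρ_T(y,x),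 and ρ_T(x,y) ≤ ρ_T(x,z) + ρ_T(z,y) for all x, y, z ∈ E. -/
/-- `T` is an `(m,q)`-isometry on the metric space `E`. -/
def IsMQIsometry {E : Type*} [MetricSpace E] (T : E → E) (m : ℕ) (q : ℝ) : Prop :=
  ∀ x y : E,
    ∑ k ∈ Finset.range (m + 1),
      (-1 : ℝ) ^ (m - k) * (m.choose k) * dist (T^[k] x) (T^[k] y) ^ q = 0

/-! Put `a n = d(Tⁿx, Tⁿy)^q`. The `(m,q)`-isometry identity at `(Tⁿx, Tⁿy)` says that the
`m`-th forward difference of `a` vanishes, so by the Gregory–Newton formula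
`a n = ∑_{k<m} (n choose k) Δᵏa 0` is a polynomial in `n` of degree `< m`. Its leading coefficient
`Δ^{m-1}a 0 = ρ_T(x,y)^q` is therefore `(m-1)! · lim a n / n^{m-1}`, hence nonnegative, and
`ρ_T(x,y) = lim ((m-1)!/n^{m-1})^{1/q} d(Tⁿx, Tⁿy)` is a limit of rescaled distances, so it
inherits the triangle inequality. -/

open Finset Filter Function Asymptotics Topology fwdDiff

-- `Δ_[h] ^[n]` needs the space: `]^` is a token of Mathlib.

section FwdDiff

variable {M G : Type*} [AddCommMonoid M] [AddCommGroup G]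

theorem fwdDiff_iter_eq_zero_of_le {h : M} {f : M → G} {p j : ℕ}
    (hf : Δ_[h] ^[p] f = 0) (hj : p ≤ j) : Δ_[h] ^[j] f = 0 := by
  obtain ⟨i, rfl⟩ := Nat.exists_eq_add_of_le' hj
  rw [iterate_add_apply, hf]
  exact iterate_fixed (funext fun _ => sub_self 0) i

theorem eq_sum_range_choose_smul_fwdDiff_iter {f : ℕ → G} {p : ℕ}
    (hf : Δ_[1] ^[p + 1] f = 0) (n : ℕ) :
    f n = ∑ k ∈ range (p + 1), n.choose k • Δ_[1] ^[k] f 0 := by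
  have newton := shift_eq_sum_fwdDiff_iter 1 f n 0
  simp only [zero_add, smul_eq_mul, mul_one] at newton
  rw [newton]
  rcases le_total n p with hnp | hpn
  · refine sum_subset (range_subset_range.mpr (by omega)) fun k _ hk => ?_
    rw [Nat.choose_eq_zero_of_lt (by simpa using hk), zero_smul]
  · refine (sum_subset (range_subset_range.mpr (by omega)) fun k _ hk => ?_).symm
    rw [fwdDiff_iter_eq_zero_of_le hf (by simpa using hk), Pi.zero_apply, smul_zero]

end FwdDiff

theorem tendsto_choose_div_pow_atTop {k p : ℕ} (hkp : k ≤ p) :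
    Tendsto (fun n : ℕ => (n.choose k : ℝ) / (n : ℝ) ^ p) atTop
      (𝓝 (if k = p then (p.factorial : ℝ)⁻¹ else 0)) := by
  rcases hkp.eq_or_lt with rfl | hlt
  · rw [if_pos rfl]
    refine ((isEquivalent_choose k).div IsEquivalent.refl).symm.tendsto_nhds ?_
    refine tendsto_const_nhds.congr' ?_
    filter_upwards [eventually_ne_atTop 0] with n hn
    simp only [Pi.div_apply]
    field_simp
  · rw [if_neg hlt.ne]
    have hpow :=
      (isLittleO_pow_pow_atTop_of_lt (𝕜 := ℝ) hlt).comp_tendsto tendsto_natCast_atTop_atTop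
    exact ((isTheta_choose k).isBigO.trans_isLittleO hpow).tendsto_div_nhds_zero

theorem tendsto_div_pow_of_fwdDiff_iter_eq_zero {f : ℕ → ℝ} {p : ℕ}
    (hf : Δ_[1] ^[p + 1] f = 0) :
    Tendsto (fun n : ℕ => f n / (n : ℝ) ^ p) atTop (𝓝 (Δ_[1] ^[p] f 0 / p.factorial)) := by
  have hlim : Tendsto
      (fun n : ℕ => ∑ k ∈ range (p + 1), (n.choose k : ℝ) / (n : ℝ) ^ p * Δ_[1] ^[k] f 0) atTop
      (𝓝 (∑ k ∈ range (p + 1), (if k = p then (p.factorial : ℝ)⁻¹ else 0) * Δ_[1] ^[k] f 0)) :=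
    tendsto_finsetSum _ fun k hk =>
      (tendsto_choose_div_pow_atTop (Nat.lt_succ_iff.mp (mem_range.mp hk))).mul_const _
  rw [sum_eq_single_of_mem p (self_mem_range_succ p) fun k _ hk => by rw [if_neg hk, zero_mul],
    if_pos rfl, inv_mul_eq_div] at hlim
  refine hlim.congr fun n => ?_
  rw [eq_sum_range_choose_smul_fwdDiff_iter hf n, sum_div]
  refine sum_congr rfl fun k _ => ?_
  rw [nsmul_eq_mul]
  ring

theorem fwdDiff_iter_nonneg_of_fwdDiff_iter_eq_zero {f : ℕ → ℝ} {p : ℕ}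
    (hf : Δ_[1] ^[p + 1] f = 0) (hf₀ : ∀ n, 0 ≤ f n) : 0 ≤ Δ_[1] ^[p] f 0 := by
  have hlim := ge_of_tendsto' (tendsto_div_pow_of_fwdDiff_iter_eq_zero hf)
    fun n => div_nonneg (hf₀ n) (pow_nonneg n.cast_nonneg p)
  simpa using (le_div_iff₀ (by positivity : (0 : ℝ) < p.factorial)).mp hlim

theorem tendsto_rpow_one_div_mul {u : ℕ → ℝ} (hu : ∀ n, 0 ≤ u n) {c q L : ℝ} {p : ℕ}
    (hc : 0 ≤ c) (hq : 0 < q) (h : Tendsto (fun n : ℕ => u n ^ q / (n : ℝ) ^ p) atTop (𝓝 L)) :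
    Tendsto (fun n : ℕ => (c / (n : ℝ) ^ p) ^ (1 / q) * u n) atTop (𝓝 ((c * L) ^ (1 / q))) := by
  refine ((h.const_mul c).rpow_const (Or.inr (by positivity))).congr fun n => ?_
  rw [mul_div_assoc', mul_div_right_comm,
    Real.mul_rpow (div_nonneg hc (by positivity)) (Real.rpow_nonneg (hu n) q),
    ← Real.rpow_mul (hu n), mul_one_div_cancel hq.ne', Real.rpow_one]

theorem le_add_of_tendsto_mul_dist {X : Type*} [PseudoMetricSpace X] {F : ℕ → X → X}
    {c : ℕ → ℝ} (hc : ∀ n, 0 ≤ c n) {x y z : X} {a b d : ℝ}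
    (hxy : Tendsto (fun n => c n * dist (F n x) (F n y)) atTop (𝓝 a))
    (hxz : Tendsto (fun n => c n * dist (F n x) (F n z)) atTop (𝓝 b))
    (hzy : Tendsto (fun n => c n * dist (F n z) (F n y)) atTop (𝓝 d)) :
    a ≤ b + d :=
  le_of_tendsto_of_tendsto' hxy (hxz.add hzy) fun n => by
    rw [← mul_add]
    exact mul_le_mul_of_nonneg_left (dist_triangle _ _ _) (hc n)

section Isometry

variable {E : Type*} [MetricSpace E] {T : E → E} {q : ℝ}

theorem fwdDiff_iter_dist_iterate_rpow (x y : E) (j n : ℕ) :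
    Δ_[1] ^[j] (fun n => dist (T^[n] x) (T^[n] y) ^ q) n =
      ∑ k ∈ range (j + 1),
        (-1 : ℝ) ^ (j - k) * (j.choose k) * dist (T^[k] (T^[n] x)) (T^[k] (T^[n] y)) ^ q := by
  rw [fwdDiff_iter_eq_sum_shift]
  refine sum_congr rfl fun k _ => ?_
  rw [smul_eq_mul, mul_one, ← iterate_add_apply, ← iterate_add_apply, add_comm k n, zsmul_eq_mul]
  push_cast
  ring

theorem IsMQIsometry.fwdDiff_iter_eq_zero {m : ℕ} (hT : IsMQIsometry T m q) (x y : E) :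
    Δ_[1] ^[m] (fun n => dist (T^[n] x) (T^[n] y) ^ q) = 0 :=
  funext fun n => by rw [fwdDiff_iter_dist_iterate_rpow, hT, Pi.zero_apply]

end Isometry

theorem stmt_16 {E : Type*} [MetricSpace E] (T : E → E) (m : ℕ) (hm : 1 ≤ m)
    (q : ℝ) (hq : 0 < q) (hT : IsMQIsometry T m q)
    (ρ : E → E → ℝ)
    (hρ : ∀ x y : E, ρ x y =
      (∑ k ∈ Finset.range m,
        (-1 : ℝ) ^ (m - 1 - k) * ((m - 1).choose k) * dist (T^[k] x) (T^[k] y) ^ q) ^ (1 / q)) :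
    (∀ x y : E, ∃ L : ℝ,
        Filter.Tendsto (fun n : ℕ => dist (T^[n] x) (T^[n] y) ^ q / (n : ℝ) ^ (m - 1))
          Filter.atTop (nhds L) ∧
        ρ x y ^ q = (Nat.factorial (m - 1) : ℝ) * L) ∧
    (∀ x y : E, 0 ≤ ρ x y) ∧
    (∀ x : E, ρ x x = 0) ∧
    (∀ x y : E, ρ x y = ρ y x) ∧
    (∀ x y z : E, ρ x y ≤ ρ x z + ρ z y) := by
  obtain ⟨p, rfl⟩ : ∃ p, m = p + 1 := ⟨m - 1, by omega⟩
  simp only [Nat.add_sub_cancel] at hρ ⊢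
  set a : E → E → ℕ → ℝ := fun x y n => dist (T^[n] x) (T^[n] y) ^ q
  have ha : ∀ x y, Δ_[1] ^[p + 1] (a x y) = 0 := hT.fwdDiff_iter_eq_zero
  have ha_nonneg : ∀ x y, 0 ≤ Δ_[1] ^[p] (a x y) 0 := fun x y =>
    fwdDiff_iter_nonneg_of_fwdDiff_iter_eq_zero (ha x y) fun _ => by positivity
  have hρa : ∀ x y, ρ x y = (Δ_[1] ^[p] (a x y) 0) ^ (1 / q) := fun x y => by
    simp only [hρ, a, fwdDiff_iter_dist_iterate_rpow, iterate_zero_apply]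
  have hfac : (p.factorial : ℝ) ≠ 0 := by positivity
  have hρlim : ∀ x y, Tendsto (fun n : ℕ => ((p.factorial : ℝ) / (n : ℝ) ^ p) ^ (1 / q) *
      dist (T^[n] x) (T^[n] y)) atTop (𝓝 (ρ x y)) := fun x y => by
    have := tendsto_rpow_one_div_mul (fun _ => dist_nonneg) (Nat.cast_nonneg p.factorial) hq
      (tendsto_div_pow_of_fwdDiff_iter_eq_zero (ha x y))
    rwa [mul_div_cancel₀ _ hfac, ← hρa] at this
  refine ⟨fun x y => ⟨_, tendsto_div_pow_of_fwdDiff_iter_eq_zero (ha x y), ?_⟩,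
    fun x y => ?_, fun x => ?_, fun x y => ?_, fun x y z => ?_⟩
  · rw [hρa, ← Real.rpow_mul (ha_nonneg x y), one_div_mul_cancel hq.ne', Real.rpow_one,
      mul_div_cancel₀ _ hfac]
  · exact (hρa x y).symm ▸ Real.rpow_nonneg (ha_nonneg x y) _
  · simp [hρ, Real.zero_rpow hq.ne', Real.zero_rpow (inv_ne_zero hq.ne')]
  · simp only [hρ, dist_comm]
  · exact le_add_of_tendsto_mul_dist (fun n => by positivity) (hρlim x y) (hρlim x z) (hρlim z y)
end

section
/- Let (E,d) be a metric space, T : E → E a map, q > 0 a real number, m, ℓ ≥ 1 integers and c, d ≥ 1 integers. If T^c is a strict (m,q)-isometry and T^d is a strict (ℓ,q)-isometry, then T^e is an (h,q)-isometry, where e is the greatest common divisor of c and d and h is the minimum of m and ℓ. -/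
/-- `T` is a strict `(m,q)`-isometry. -/
def IsStrictMQIsometry {E : Type*} [MetricSpace E] (T : E → E) (m : ℕ) (q : ℝ) : Prop :=
  IsMQIsometry T m q ∧ (m = 1 ∨ ¬ IsMQIsometry T (m - 1) q)

/-!
Put `f n = d(Tⁿx, Tⁿy)^q` and let `S` be the shift of real sequences. Then `T^a` is an
`(m,q)`-isometry exactly when `(S^a - 1)^m` kills every such `f`, and the polynomials `p` with
`p(S) f = 0` form an ideal of `ℝ[X]`. So it suffices that `(X^e - 1)^(min m ℓ)` lies in the ideal
generated by `(X^c - 1)^m` and `(X^d - 1)^ℓ`. Euclid's algorithm puts `X^e - 1` in the ideal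
generated by `X^c - 1 = (X^e - 1) P` and `X^d - 1 = (X^e - 1) Q`, so `P` and `Q` are coprime; as
`X^c - 1` is squarefree in characteristic zero, `P` is also coprime to `X^e - 1`. For `m ≤ ℓ`,
a Bézout relation between `P^m` and `(X^e - 1)^(ℓ - m) Q^ℓ`, multiplied by `(X^e - 1)^m`, does it.
-/

open Polynomial Finset

theorem pow_sub_one_dvd_pow_sub_one_of_dvd {R : Type*} [CommRing R] (x : R) {a b : ℕ}
    (h : a ∣ b) : x ^ a - 1 ∣ x ^ b - 1 := by
  obtain ⟨k, rfl⟩ := h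
  simpa [pow_mul] using sub_dvd_pow_sub_pow (x ^ a) 1 k

theorem pow_gcd_sub_one_mem_span {R : Type*} [CommRing R] (x : R) (c d : ℕ) :
    x ^ Nat.gcd c d - 1 ∈ Ideal.span {x ^ c - 1, x ^ d - 1} := by
  induction c, d using Nat.gcd.induction with
  | H0 d => exact Ideal.subset_span (by simp)
  | H1 c d _ ih =>
    obtain ⟨u, v, huv⟩ := Ideal.mem_span_pair.mp ih
    -- `x^d - 1 = x^(d % c) (x^(c (d / c)) - 1) + (x^(d % c) - 1)` and `x^c - 1 ∣ x^(c (d / c)) - 1`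
    obtain ⟨s, hs⟩ := pow_sub_one_dvd_pow_sub_one_of_dvd x (dvd_mul_right c (d / c))
    have hd : x ^ (d % c) * x ^ (c * (d / c)) = x ^ d := by rw [← pow_add, Nat.mod_add_div]
    refine Ideal.mem_span_pair.mpr ⟨v - u * x ^ (d % c) * s, u, ?_⟩
    rw [Nat.gcd_rec, ← huv]
    linear_combination (u * x ^ (d % c)) * hs - u * hd

section Field

variable {K : Type*} [Field K]

theorem X_pow_gcd_sub_one_pow_mem_span_of_le {c : ℕ} (hc : (c : K) ≠ 0) (d : ℕ) {m ℓ : ℕ}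
    (hmℓ : m ≤ ℓ) :
    (X ^ Nat.gcd c d - 1 : K[X]) ^ m ∈ Ideal.span {(X ^ c - 1) ^ m, (X ^ d - 1) ^ ℓ} := by
  set G : K[X] := X ^ Nat.gcd c d - 1
  obtain ⟨P, hP⟩ := pow_sub_one_dvd_pow_sub_one_of_dvd (X : K[X]) (Nat.gcd_dvd_left c d)
  obtain ⟨Q, hQ⟩ := pow_sub_one_dvd_pow_sub_one_of_dvd (X : K[X]) (Nat.gcd_dvd_right c d)
  have hG : G ≠ 0 := by
    have hc0 : 0 < c := Nat.pos_of_ne_zero (by rintro rfl; simp at hc)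
    simpa using X_pow_sub_C_ne_zero (Nat.gcd_pos_of_pos_left d hc0) (1 : K)
  have hPQ : IsCoprime P Q := by
    obtain ⟨u, v, huv⟩ := Ideal.mem_span_pair.mp (pow_gcd_sub_one_mem_span (X : K[X]) c d)
    refine ⟨u, v, mul_left_cancel₀ hG ?_⟩
    rw [hP, hQ] at huv
    linear_combination huv
  have hPG : IsCoprime P G := by
    refine (IsRelPrime.of_squarefree_mul ?_).isCoprime
    rw [mul_comm, ← hP]
    exact (X_pow_sub_one_separable_iff.mpr hc).squarefree
  obtain ⟨α, β, hαβ⟩ : IsCoprime (P ^ m) (G ^ (ℓ - m) * Q ^ ℓ) :=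
    (hPG.pow_right.mul_right hPQ.pow_right).pow_left
  have hGℓ : G ^ ℓ = G ^ (ℓ - m) * G ^ m := by rw [← pow_add, Nat.sub_add_cancel hmℓ]
  refine Ideal.mem_span_pair.mpr ⟨α, β, ?_⟩
  rw [hP, hQ, mul_pow, mul_pow, hGℓ]
  linear_combination G ^ m * hαβ

theorem X_pow_gcd_sub_one_pow_min_mem_span {c d : ℕ} (hc : (c : K) ≠ 0) (hd : (d : K) ≠ 0)
    (m ℓ : ℕ) :
    (X ^ Nat.gcd c d - 1 : K[X]) ^ min m ℓ ∈ Ideal.span {(X ^ c - 1) ^ m, (X ^ d - 1) ^ ℓ} := by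
  rcases le_total m ℓ with h | h
  · rw [min_eq_left h]
    exact X_pow_gcd_sub_one_pow_mem_span_of_le hc d h
  · rw [min_eq_right h, Nat.gcd_comm, Set.pair_comm]
    exact X_pow_gcd_sub_one_pow_mem_span_of_le hd c h

end Field

section Shift

variable (R : Type*) [CommRing R]

noncomputable def seqShift : Module.End R (ℕ → R) :=
  LinearMap.funLeft R R Nat.succ

variable {R}

theorem seqShift_pow_apply (a : ℕ) (f : ℕ → R) (n : ℕ) : (seqShift R ^ a) f n = f (n + a) := by
  induction a generalizing f with
  | zero => rfl
  | succ a ih => rw [pow_succ, Module.End.mul_apply, ih]; rfl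

theorem seqShift_pow_sub_one_pow_apply (a m : ℕ) (f : ℕ → R) (j : ℕ) :
    ((seqShift R ^ a - 1) ^ m) f j
      = ∑ k ∈ range (m + 1), (-1 : R) ^ (m - k) * m.choose k * f (j + k * a) := by
  rw [sub_eq_add_neg, (Commute.one_right (seqShift R ^ a)).neg_right.add_pow,
    LinearMap.sum_apply, Finset.sum_apply]
  refine sum_congr rfl fun k _ => ?_
  have hsign : (-1 : Module.End R (ℕ → R)) ^ (m - k) = (((-1) ^ (m - k) : ℤ) : Module.End R _) := by
    push_cast; rfl
  rw [hsign, ← pow_mul, Module.End.mul_apply, Module.End.mul_apply, seqShift_pow_apply,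
    Module.End.intCast_apply, Module.End.natCast_apply]
  simp [mul_comm a k, mul_assoc]

end Shift

theorem isMQIsometry_iterate_iff {E : Type*} [MetricSpace E] (T : E → E) (a m : ℕ) (q : ℝ) :
    IsMQIsometry (T^[a]) m q ↔
      ∀ x y : E, ((seqShift ℝ ^ a - 1) ^ m) (fun n => dist (T^[n] x) (T^[n] y) ^ q) = 0 := by
  have hiter : ∀ (j k : ℕ) (z : E), T^[j + k * a] z = (T^[a])^[k] (T^[j] z) := by
    intro j k z
    rw [← Function.iterate_mul, ← Function.iterate_add_apply, mul_comm, add_comm]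
  constructor
  · intro h x y
    funext j
    simpa only [seqShift_pow_sub_one_pow_apply, hiter, Pi.zero_apply] using
      h (T^[j] x) (T^[j] y)
  · intro h x y
    simpa only [seqShift_pow_sub_one_pow_apply, hiter, Function.iterate_zero, id,
      Pi.zero_apply] using congrFun (h x y) 0

theorem stmt_17_general {E : Type*} [MetricSpace E] (T : E → E) (q : ℝ)
    (m ℓ : ℕ) (c d : ℕ) (hc : 1 ≤ c) (hd : 1 ≤ d)
    (hTc : IsStrictMQIsometry (T^[c]) m q)
    (hTd : IsStrictMQIsometry (T^[d]) ℓ q) :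
    IsMQIsometry (T^[Nat.gcd c d]) (min m ℓ) q := by
  have hc' : (c : ℝ) ≠ 0 := by positivity
  have hd' : (d : ℝ) ≠ 0 := by positivity
  obtain ⟨α, β, hαβ⟩ := Ideal.mem_span_pair.mp (X_pow_gcd_sub_one_pow_min_mem_span hc' hd' m ℓ)
  have hcm := (isMQIsometry_iterate_iff T c m q).mp hTc.1
  have hdℓ := (isMQIsometry_iterate_iff T d ℓ q).mp hTd.1
  refine (isMQIsometry_iterate_iff T _ _ q).mpr fun x y => ?_
  have hop := congrArg (aeval (seqShift ℝ)) hαβ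
  simp only [map_add, map_mul, map_pow, map_sub, map_one, aeval_X] at hop
  rw [← hop, LinearMap.add_apply, Module.End.mul_apply, Module.End.mul_apply, hcm x y, hdℓ x y,
    map_zero, map_zero, add_zero]

theorem stmt_17 {E : Type*} [MetricSpace E] (T : E → E) (q : ℝ) (hq : 0 < q)
    (m ℓ : ℕ) (hm : 1 ≤ m) (hℓ : 1 ≤ ℓ) (c d : ℕ) (hc : 1 ≤ c) (hd : 1 ≤ d)
    (hTc : IsStrictMQIsometry (T^[c]) m q)
    (hTd : IsStrictMQIsometry (T^[d]) ℓ q) :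
    IsMQIsometry (T^[Nat.gcd c d]) (min m ℓ) q :=
  stmt_17_general T q m ℓ c d hc hd hTc hTd
end

section
/- Let (E,d) be a metric space, q > 0 a real number, n, m ≥ 1 integers, and S, T : E → E maps with S ∘ T = T ∘ S. If T is an (n,q)-isometry and S is an (m,q)-isometry, then S ∘ T is an (m+n−1, q)-isometry. -/
open Finset fwdDiff fwdDiff_aux

theorem Commute.add_pow_smul_eq_zero_of_pow_smul_eq_zero {A V : Type*} [Semiring A]
    [AddCommMonoid V] [Module A V] {a b : A} (hab : Commute a b) {m n : ℕ} {v : V}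
    (ha : a ^ m • v = 0) (hb : b ^ n • v = 0) : (a + b) ^ (m + n - 1) • v = 0 := by
  rw [hab.add_pow', sum_smul]
  refine sum_eq_zero fun ⟨i, j⟩ hij => ?_
  rw [HasAntidiagonal.mem_antidiagonal] at hij
  dsimp only
  rw [smul_assoc, mul_smul]
  by_cases hi : m ≤ i
  · rw [← pow_sub_mul_pow a hi, mul_smul, ← mul_smul (a ^ m), (hab.pow_pow m j).eq, mul_smul,
      ha]
    simp only [smul_zero]
  · rw [← pow_sub_mul_pow b (show n ≤ j by omega), mul_smul, hb]
    simp only [smul_zero]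

section ForwardDifference

variable {M G : Type*} [AddCommMonoid M] [AddCommGroup G]

theorem fwdDiffₗ_pow_smul (h : M) (n : ℕ) (f : M → G) :
    fwdDiffₗ M G h ^ n • f = (fwdDiff h)^[n] f := by
  rw [Module.End.smul_def, coe_fwdDiffₗ_pow]

theorem fwdDiffₗ_commute (h k : M) : Commute (fwdDiffₗ M G h) (fwdDiffₗ M G k) := by
  ext f y
  simp only [Module.End.mul_apply, fwdDiffₗ_apply, fwdDiff, add_right_comm y h k]
  abel

theorem fwdDiffₗ_add (h k : M) :
    fwdDiffₗ M G (h + k) = fwdDiffₗ M G h * shiftₗ M G k + fwdDiffₗ M G k := by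
  refine LinearMap.ext fun f => funext fun y => ?_
  simp only [LinearMap.add_apply, Module.End.mul_apply, fwdDiffₗ_apply, Pi.add_apply, fwdDiff,
    shiftₗ_apply]
  rw [← add_assoc, sub_add_sub_cancel]

theorem fwdDiff_iter_add_eq_zero {h k : M} {m n : ℕ} {f : M → G}
    (hf_h : (fwdDiff h)^[m] f = 0) (hf_k : (fwdDiff k)^[n] f = 0) :
    (fwdDiff (h + k))^[m + n - 1] f = 0 := by
  have hcomm : Commute (fwdDiffₗ M G h * shiftₗ M G k) (fwdDiffₗ M G k) :=
    (fwdDiffₗ_commute h k).mul_left ((fwdDiffₗ_commute k k).add_left (Commute.one_left _))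
  have hs : Commute (fwdDiffₗ M G h) (shiftₗ M G k) :=
    (fwdDiffₗ_commute h k).add_right (Commute.one_right _)
  have ha : (fwdDiffₗ M G h * shiftₗ M G k) ^ m • f = 0 := by
    rw [hs.mul_pow, (hs.pow_pow m m).eq, mul_smul, fwdDiffₗ_pow_smul, hf_h, smul_zero]
  have hb : fwdDiffₗ M G k ^ n • f = 0 := by rw [fwdDiffₗ_pow_smul, hf_k]
  have := hcomm.add_pow_smul_eq_zero_of_pow_smul_eq_zero ha hb
  rwa [← fwdDiffₗ_add, fwdDiffₗ_pow_smul] at this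

theorem sum_shift_eq_fwdDiff_iter {R : Type*} [Ring R] (f : M → R) (h y : M) (m : ℕ) :
    ∑ k ∈ range (m + 1), (-1 : R) ^ (m - k) * m.choose k * f (y + k • h) =
      (fwdDiff h)^[m] f y := by
  rw [fwdDiff_iter_eq_sum_shift]
  refine sum_congr rfl fun k _ => ?_
  rw [zsmul_eq_mul]
  push_cast
  rfl

end ForwardDifference

theorem IsMQIsometry.fwdDiff_iter_eq_zero_s18 {E M : Type*} [MetricSpace E] [AddCommMonoid M]
    {U : E → E} {m : ℕ} {q : ℝ} (hU : IsMQIsometry U m q) {f : M → ℝ} {h : M} (u v : M → E)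
    (hf : ∀ y (k : ℕ), f (y + k • h) = dist (U^[k] (u y)) (U^[k] (v y)) ^ q) :
    (fwdDiff h)^[m] f = 0 := by
  funext y
  rw [← sum_shift_eq_fwdDiff_iter]
  simp only [hf]
  exact hU _ _

theorem stmt_18_general {E : Type*} [MetricSpace E] (S T : E → E) (q : ℝ) (n m : ℕ)
    (hcomm : S ∘ T = T ∘ S)
    (hT : IsMQIsometry T n q) (hS : IsMQIsometry S m q) :
    IsMQIsometry (S ∘ T) (m + n - 1) q := by
  intro x y
  have hST : Function.Commute S T := congrFun hcomm
  set g : ℕ × ℕ → ℝ := fun p => dist (S^[p.1] (T^[p.2] x)) (S^[p.1] (T^[p.2] y)) ^ q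
  have hgS : (fwdDiff ((1, 0) : ℕ × ℕ))^[m] g = 0 :=
    hS.fwdDiff_iter_eq_zero_s18 (fun p => S^[p.1] (T^[p.2] x)) (fun p => S^[p.1] (T^[p.2] y))
      fun p k => by simp [g, add_comm p.1 k, Function.iterate_add_apply]
  have hgT : (fwdDiff ((0, 1) : ℕ × ℕ))^[n] g = 0 :=
    hT.fwdDiff_iter_eq_zero_s18 (fun p => T^[p.2] (S^[p.1] x)) (fun p => T^[p.2] (S^[p.1] y))
      fun p k => by
        simp [g, add_comm p.2 k, Function.iterate_add_apply, (hST.iterate_iterate _ _).eq]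
  have hg := fwdDiff_iter_add_eq_zero hgS hgT
  calc _ = ∑ k ∈ range (m + n - 1 + 1), (-1 : ℝ) ^ (m + n - 1 - k) * (m + n - 1).choose k
        * g ((0, 0) + k • ((1, 0) + (0, 1))) := by
        simp [g, hST.comp_iterate]
    _ = 0 := by rw [sum_shift_eq_fwdDiff_iter, hg, Pi.zero_apply]

theorem stmt_18 {E : Type*} [MetricSpace E] (S T : E → E) (q : ℝ) (hq : 0 < q)
    (n m : ℕ) (hn : 1 ≤ n) (hm : 1 ≤ m)
    (hcomm : S ∘ T = T ∘ S)
    (hT : IsMQIsometry T n q) (hS : IsMQIsometry S m q) :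
    IsMQIsometry (S ∘ T) (m + n - 1) q :=
  stmt_18_general S T q n m hcomm hT hS
end

section
/- Let H be a complex Hilbert space, m ≥ 1 and n ≥ 1 integers, T a bounded linear operator on H which is a strict m-isometry, and Q a bounded linear operator on H with Q^n = 0, Q^{n-1} ≠ 0, and T Q = Q T. Then T + Q is a (2n + m − 2)-isometry. -/
open ContinuousLinearMap

/-- `T` is an `m`-isometry on the complex Hilbert space `H`. -/
def IsMIsometry {H : Type*} [NormedAddCommGroup H] [InnerProductSpace ℂ H] [CompleteSpace H]
    (T : H →L[ℂ] H) (m : ℕ) : Prop :=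
  ∑ k ∈ Finset.range (m + 1),
    ((-1 : ℤ) ^ (m - k) * (m.choose k)) • ((adjoint T) ^ k * T ^ k) = 0

/-- `T` is a strict `m`-isometry. -/
def IsStrictMIsometry {H : Type*} [NormedAddCommGroup H] [InnerProductSpace ℂ H]
    [CompleteSpace H] (T : H →L[ℂ] H) (m : ℕ) : Prop :=
  IsMIsometry T m ∧ (m = 1 ∨ ¬ IsMIsometry T (m - 1))

/-!
Write `E_S X = S* X S`, an operator on the algebra of operators. The `m`-isometry defect
`∑ (-1)^(m-k) C(m,k) S*^k S^k` is `(E_S - 1)^m 1`. Since `T` and `Q` commute,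
`E_(T+Q) - 1 = (E_T - 1) + E' + E''` with `E' X = T* X Q` and `E'' X = Q* X (T + Q)` pairwise
commuting, and `E'^n = E''^n = 0`. Expanding the power binomially, every term of
`(E_T - 1 + E' + E'')^(2n+m-2) 1` contains `(E_T - 1)^m` (which kills `1`), `E'^n` or `E''^n`.
-/

open TensorProduct MulOpposite

theorem Commute.add_pow_smul_eq_zero {R M : Type*} [Semiring R] [AddCommMonoid M] [Module R M]
    {f g : R} (hfg : Commute f g) {x : M} {a b p : ℕ} (hf : f ^ a • x = 0) (hg : g ^ b = 0)
    (h : a + b ≤ p + 1) : (f + g) ^ p • x = 0 := by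
  rw [hfg.add_pow', Finset.sum_smul]
  refine Finset.sum_eq_zero ?_
  rintro ⟨i, j⟩ hij
  rw [Finset.HasAntidiagonal.mem_antidiagonal] at hij
  dsimp only
  by_cases hj : b ≤ j
  · rw [pow_eq_zero_of_le hj hg, mul_zero, smul_zero, zero_smul]
  · obtain ⟨k, rfl⟩ : ∃ k, i = k + a := ⟨i - a, by omega⟩
    rw [smul_assoc, (hfg.pow_pow _ _).eq, pow_add, mul_smul, mul_smul, hf, smul_zero, smul_zero,
      smul_zero]

theorem sub_one_pow_eq_sum {R : Type*} [Ring R] (x : R) (k : ℕ) :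
    (x - 1) ^ k = ∑ j ∈ Finset.range (k + 1), ((-1 : ℤ) ^ (k - j) * k.choose j) • x ^ j := by
  rw [sub_eq_add_neg, (Commute.neg_one_right x).add_pow k]
  refine Finset.sum_congr rfl fun j _ => ?_
  have hneg : Commute ((-1 : R) ^ (k - j)) (x ^ j) := (Commute.neg_one_left x).pow_pow _ _
  rw [zsmul_eq_mul, Int.cast_mul, Int.cast_pow, Int.cast_neg, Int.cast_one, Int.cast_natCast,
    mul_assoc, ← (hneg.mul_left (Nat.cast_commute _ _)).symm.eq]

section StarAlgebra

variable (R : Type*) {A : Type*} [CommSemiring R] [Ring A] [StarRing A] [Algebra R A]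

noncomputable def starSandwich (S : A) : Module.End R A :=
  AlgHom.mulLeftRight R A (star S ⊗ₜ op S)

theorem starSandwich_sub_one_pow_apply_one (S : A) (k : ℕ) :
    ((starSandwich R S - 1) ^ k) 1
      = ∑ j ∈ Finset.range (k + 1), ((-1 : ℤ) ^ (k - j) * k.choose j) • (star S ^ j * S ^ j) := by
  rw [sub_one_pow_eq_sum, LinearMap.sum_apply]
  refine Finset.sum_congr rfl fun j _ => ?_
  rw [LinearMap.smul_apply, starSandwich, ← map_pow, Algebra.TensorProduct.tmul_pow,
    AlgHom.mulLeftRight_apply, mul_one, ← op_pow, unop_op]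

variable {R}

theorem starSandwich_add_sub_one_pow_apply_one_eq_zero {T Q : A} (hTQ : Commute T Q)
    {m n : ℕ} (hT : ((starSandwich R T - 1) ^ m) 1 = 0) (hQ : Q ^ n = 0) :
    ((starSandwich R (T + Q) - 1) ^ (2 * n + m - 2)) 1 = 0 := by
  set φ := AlgHom.mulLeftRight R A
  set E' := φ (star T ⊗ₜ op Q)
  set E'' := φ (star Q ⊗ₜ op (T + Q))
  have hsplit : starSandwich R (T + Q) - 1 = (starSandwich R T - 1 + E') + E'' := by
    simp only [starSandwich, E', E'', star_add, op_add, add_tmul, tmul_add, map_add]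
    abel
  have hstar : Commute (star T) (star Q) := hTQ.star_star
  have hE' : Commute (starSandwich R T - 1) E' :=
    (((Commute.refl _).tmul hTQ.op).map φ).sub_left (Commute.one_left _)
  have hTE'' : Commute (starSandwich R T) E'' :=
    (hstar.tmul ((Commute.refl T).add_right hTQ).op).map φ
  have hE'E'' : Commute E' E'' := (hstar.tmul (hTQ.symm.add_right (Commute.refl Q)).op).map φ
  have hE'' : Commute (starSandwich R T - 1 + E') E'' :=
    (hTE''.sub_left (Commute.one_left _)).add_left hE'E''
  have hE'n : E' ^ n = 0 := by
    rw [← map_pow, Algebra.TensorProduct.tmul_pow, ← op_pow, hQ, op_zero, tmul_zero, map_zero]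
  have hE''n : E'' ^ n = 0 := by
    rw [← map_pow, Algebra.TensorProduct.tmul_pow, ← star_pow, hQ, star_zero, zero_tmul,
      map_zero]
  have hstep : (starSandwich R T - 1 + E') ^ (m + n - 1) • (1 : A) = 0 :=
    hE'.add_pow_smul_eq_zero hT hE'n (by omega)
  rw [hsplit, ← Module.End.smul_def]
  exact hE''.add_pow_smul_eq_zero hstep hE''n (by omega)

end StarAlgebra

theorem isMIsometry_iff {H : Type*} [NormedAddCommGroup H] [InnerProductSpace ℂ H]
    [CompleteSpace H] (T : H →L[ℂ] H) (m : ℕ) :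
    IsMIsometry T m ↔ ((starSandwich ℂ T - 1) ^ m) 1 = 0 := by
  rw [IsMIsometry, starSandwich_sub_one_pow_apply_one, star_eq_adjoint]

theorem stmt_19_general {H : Type*} [NormedAddCommGroup H] [InnerProductSpace ℂ H] [CompleteSpace H]
    (m n : ℕ)
    (T Q : H →L[ℂ] H)
    (hT : IsStrictMIsometry T m)
    (hQn : Q ^ n = 0)
    (hcomm : T * Q = Q * T) :
    IsMIsometry (T + Q) (2 * n + m - 2) := by
  rw [isMIsometry_iff]
  exact starSandwich_add_sub_one_pow_apply_one_eq_zero hcomm ((isMIsometry_iff T m).mp hT.1) hQn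

theorem stmt_19 {H : Type*} [NormedAddCommGroup H] [InnerProductSpace ℂ H] [CompleteSpace H]
    (m n : ℕ) (hm : 1 ≤ m) (hn : 1 ≤ n)
    (T Q : H →L[ℂ] H)
    (hT : IsStrictMIsometry T m)
    (hQn : Q ^ n = 0) (hQn1 : Q ^ (n - 1) ≠ 0)
    (hcomm : T * Q = Q * T) :
    IsMIsometry (T + Q) (2 * n + m - 2) :=
  stmt_19_general m n T Q hT hQn hcomm
end
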